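/- arXiv:0905.2479 — 7 statements merged into one kernel-verified Lean document; each statement's English description precedes it below -/
import Mathlib

section
/- Let a_1,...,a_B > 0 and x_1,...,x_B > 0 be real numbers, and define D_n = a_n x_n / (∑_m a_m x_m) - x_n / (∑_m x_m). Let T_0 = {n : D_n ≥ 0} and T_1 = {n : D_n < 0}. Then ∑_{n ∈ T_0} D_n = ∑_{n ∈ T_1} |D_n|, and this common value is at most (1 - √(a/A)) / (1 + √(a/A)), where a = min_n a_n and A = max_n a_n. -/
/-!
With weights `p n = x n / ∑ x` and `c = ∑ x / ∑ a x` one has `D n = p n * (a n * c - 1)`,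
and `∑ D = 0`. The positive part `t` of `D` is therefore at most `P(T₀) (A c - 1)` and at most
`P(T₁) (1 - a c)`, where `P(T) = ∑_{n ∈ T} p n`; since `P(T₀) + P(T₁) = 1` this gives
`t (A - a) c ≤ (1 - a c) (A c - 1)`, and the right side is at
most `c (√A - √a)²` because the difference is `(c √(a A) - 1)²`.
-/

open Finset

theorem sum_filter_nonneg_eq_sum_filter_neg_abs {ι M : Type*} [AddCommGroup M] [LinearOrder M]
    [IsOrderedAddMonoid M] (s : Finset ι) (f : ι → M) (hf : ∑ n ∈ s, f n = 0) :
    ∑ n ∈ s.filter (fun n => 0 ≤ f n), f n = ∑ n ∈ s.filter (fun n => f n < 0), |f n| := by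
  have hsplit := sum_filter_add_sum_filter_not s (fun n => 0 ≤ f n) f
  simp only [not_le, hf] at hsplit
  rw [sum_congr rfl fun n hn => abs_of_neg (mem_filter.mp hn).2, sum_neg_distrib]
  exact eq_neg_of_add_eq_zero_left hsplit

theorem mul_sub_le_of_le_mul_of_le_mul {t p q α β : ℝ} (hpq : p + q = 1)
    (hα : α ≤ 1) (hβ : 1 ≤ β) (ht₀ : t ≤ p * (β - 1)) (ht₁ : t ≤ q * (1 - α)) :
    t * (β - α) ≤ (1 - α) * (β - 1) := by
  have h₀ := mul_le_mul_of_nonneg_right ht₀ (sub_nonneg.mpr hα)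
  have h₁ := mul_le_mul_of_nonneg_right ht₁ (sub_nonneg.mpr hβ)
  linear_combination h₀ + h₁ + (1 - α) * (β - 1) * hpq

theorem one_sub_mul_sub_one_le_sq_sqrt_sub_sqrt {α β : ℝ} (hα : 0 ≤ α) (hβ : 0 ≤ β) :
    (1 - α) * (β - 1) ≤ (√β - √α) ^ 2 := by
  have hs := Real.sq_sqrt hα
  have hS := Real.sq_sqrt hβ
  nlinarith [sq_nonneg (√α * √β - 1)]

theorem le_one_sub_sqrt_div_one_add_sqrt {t p q α β : ℝ}
    (hpq : p + q = 1) (hα : 0 < α) (hα₁ : α ≤ 1) (hβ₁ : 1 ≤ β)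
    (ht₀ : t ≤ p * (β - 1)) (ht₁ : t ≤ q * (1 - α)) :
    t ≤ (1 - √(α / β)) / (1 + √(α / β)) := by
  have hβ : 0 < β := by linarith
  have hs := Real.sqrt_pos.mpr hα
  have hS := Real.sqrt_pos.mpr hβ
  have hbound : (1 - √(α / β)) / (1 + √(α / β)) = (√β - √α) / (√β + √α) := by
    rw [Real.sqrt_div hα.le]
    field_simp
  rw [hbound, le_div_iff₀ (by positivity)]
  rcases (Real.sqrt_le_sqrt (hα₁.trans hβ₁)).eq_or_lt with heq | hlt
  · have hαβ : α = β := (Real.sqrt_inj hα.le hβ.le).mp heq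
    have ht : t ≤ 0 := by
      rwa [show β = 1 by linarith, sub_self, mul_zero] at ht₀
    rw [heq, sub_self]
    nlinarith
  · have hkey := (mul_sub_le_of_le_mul_of_le_mul hpq hα₁ hβ₁ ht₀ ht₁).trans
      (one_sub_mul_sub_one_le_sq_sqrt_sub_sqrt hα.le hβ.le)
    have hdiff : β - α = (√β - √α) * (√β + √α) := by
      linear_combination Real.sq_sqrt hα.le - Real.sq_sqrt hβ.le
    rw [hdiff] at hkey
    nlinarith

theorem sum_filter_nonneg_le_of_weighted_bounds {ι : Type*} (s : Finset ι) (w f : ι → ℝ)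
    {α β : ℝ} (hα : 0 < α) (hw₁ : ∑ n ∈ s, w n = 1)
    (hf : ∑ n ∈ s, f n = 0) (hlo : ∀ n ∈ s, w n * (α - 1) ≤ f n)
    (hhi : ∀ n ∈ s, f n ≤ w n * (β - 1)) :
    ∑ n ∈ s.filter (fun n => 0 ≤ f n), f n ≤ (1 - √(α / β)) / (1 + √(α / β)) := by
  have hα₁ : α - 1 ≤ 0 := by
    simpa [← sum_mul, hw₁, hf] using sum_le_sum hlo
  have hβ₁ : 0 ≤ β - 1 := by
    simpa [← sum_mul, hw₁, hf] using sum_le_sum hhi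
  have hsplit := sum_filter_add_sum_filter_not s (fun n => 0 ≤ f n) f
  have hwsplit := sum_filter_add_sum_filter_not s (fun n => 0 ≤ f n) w
  rw [hf] at hsplit
  rw [hw₁] at hwsplit
  refine le_one_sub_sqrt_div_one_add_sqrt hwsplit hα (by linarith) (by linarith) ?_ ?_
  · rw [sum_mul]
    exact sum_le_sum fun n hn => hhi n (mem_filter.mp hn).1
  · have := sum_le_sum fun n (hn : n ∈ s.filter (fun n => ¬0 ≤ f n)) =>
      hlo n (mem_filter.mp hn).1
    rw [← sum_mul] at this
    linarith

theorem stmt2_general (B : ℕ) (a x : Fin B → ℝ) (ha : ∀ i, 0 < a i)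
    (hx : ∀ i, 0 < x i) (D : Fin B → ℝ)
    (hD : ∀ n, D n = a n * x n / (∑ m, a m * x m) - x n / (∑ m, x m))
    (amin amax : ℝ) (hmin : IsLeast (Set.range a) amin)
    (hmax : IsGreatest (Set.range a) amax) :
    (∑ n ∈ Finset.univ.filter (fun n => 0 ≤ D n), D n) =
      (∑ n ∈ Finset.univ.filter (fun n => D n < 0), |D n|) ∧
    (∑ n ∈ Finset.univ.filter (fun n => 0 ≤ D n), D n) ≤
      (1 - Real.sqrt (amin / amax)) / (1 + Real.sqrt (amin / amax)) := by
  obtain ⟨⟨i₀, rfl⟩, hle⟩ := hmin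
  obtain ⟨⟨i₁, rfl⟩, hge⟩ := hmax
  set X := ∑ m, x m
  set S := ∑ m, a m * x m
  have hX : 0 < X := sum_pos (fun i _ => hx i) ⟨i₀, mem_univ _⟩
  have hS : 0 < S := sum_pos (fun i _ => mul_pos (ha i) (hx i)) ⟨i₀, mem_univ _⟩
  have hsum : ∑ n, D n = 0 := by
    simp only [hD]
    rw [sum_sub_distrib, ← sum_div, ← sum_div]
    exact sub_eq_zero.mpr ((div_self hS.ne').trans (div_self hX.ne').symm)
  set c := X / S with hc_def
  have hc : 0 < c := div_pos hX hS
  have hDc : ∀ n, D n = x n / X * (a n * c - 1) := fun n => by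
    rw [hD n, hc_def]
    field_simp
  have hweighted : ∀ {b b' : ℝ}, b ≤ b' → ∀ n, x n / X * (b * c - 1) ≤ x n / X * (b' * c - 1) :=
    fun hb n => mul_le_mul_of_nonneg_left (by gcongr) (div_pos (hx n) hX).le
  refine ⟨sum_filter_nonneg_eq_sum_filter_neg_abs _ D hsum, ?_⟩
  rw [← mul_div_mul_right (a i₀) (a i₁) hc.ne']
  exact sum_filter_nonneg_le_of_weighted_bounds univ (fun n => x n / X) D (mul_pos (ha i₀) hc)
    (by rw [← sum_div, div_self hX.ne']) hsum
    (fun n _ => hDc n ▸ hweighted (hle ⟨n, rfl⟩) n)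
    (fun n _ => hDc n ▸ hweighted (hge ⟨n, rfl⟩) n)

theorem stmt2 (B : ℕ) (hB : 0 < B) (a x : Fin B → ℝ) (ha : ∀ i, 0 < a i)
    (hx : ∀ i, 0 < x i) (D : Fin B → ℝ)
    (hD : ∀ n, D n = a n * x n / (∑ m, a m * x m) - x n / (∑ m, x m))
    (amin amax : ℝ) (hmin : IsLeast (Set.range a) amin)
    (hmax : IsGreatest (Set.range a) amax) :
    (∑ n ∈ Finset.univ.filter (fun n => 0 ≤ D n), D n) =
      (∑ n ∈ Finset.univ.filter (fun n => D n < 0), |D n|) ∧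
    (∑ n ∈ Finset.univ.filter (fun n => 0 ≤ D n), D n) ≤
      (1 - Real.sqrt (amin / amax)) / (1 + Real.sqrt (amin / amax)) :=
  stmt2_general B a x ha hx D hD amin amax hmin hmax
end

section
/- The function d_H(v, w) = max over pairs (i, j) of |Log((w_i / w_j) / (v_i / v_j))| defines a metric on the set W_ℂ^+ = {w ∈ ℂ^B : ∑_i w_i = 1, Re(w_i) > 0 for all i}, where Log is the principal branch of the complex logarithm. -/
/-!
Swapping `v` and `w` inverts every cross-ratio `q`, and `‖Log q⁻¹‖ = ‖Log q‖` even on the branch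
cut. The principal logarithm is not additive, but its real part is, and
`|arg (a * b)| ≤ |arg a| + |arg b|`; hence `‖Log (a * b)‖ ≤ ‖Log a‖ + ‖Log b‖` for all `a, b`, and
since the cross-ratio from `u` to `w` factors through `v`, this gives the triangle inequality.
If the distance vanishes, all cross-ratios are `1`, so `w` is proportional to `v`, and the
normalisation `∑ i, v i = ∑ i, w i = 1` forces `v = w`.
-/

open Complex

theorem Real.Angle.abs_toReal_coe_le (θ : ℝ) : |(θ : Real.Angle).toReal| ≤ |θ| := by
  by_cases h : |θ| < Real.pi
  · rw [Real.Angle.toReal_coe_eq_self_iff.mpr ((abs_lt.mp h).imp_right le_of_lt)]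
  · exact (Real.Angle.abs_toReal_le_pi _).trans (not_lt.mp h)

namespace Complex

theorem abs_arg_mul_le {a b : ℂ} (ha : a ≠ 0) (hb : b ≠ 0) :
    |(a * b).arg| ≤ |a.arg| + |b.arg| := by
  rw [← arg_coe_angle_toReal_eq_arg, arg_mul_coe_angle ha hb, ← Real.Angle.coe_add]
  exact (Real.Angle.abs_toReal_coe_le _).trans (abs_add_le _ _)

theorem norm_le_norm_of_abs_re_le_of_abs_im_le {z w : ℂ} (hre : |z.re| ≤ |w.re|)
    (him : |z.im| ≤ |w.im|) : ‖z‖ ≤ ‖w‖ := by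
  rw [norm_eq_sqrt_sq_add_sq, norm_eq_sqrt_sq_add_sq]
  exact Real.sqrt_le_sqrt (add_le_add (sq_le_sq.mpr hre) (sq_le_sq.mpr him))

theorem norm_log_inv (z : ℂ) : ‖log z⁻¹‖ = ‖log z‖ := by
  rw [log_inv_eq_ite]
  split_ifs <;> simp only [norm_neg, norm_conj]

theorem norm_log_mul_le (a b : ℂ) : ‖log (a * b)‖ ≤ ‖log a‖ + ‖log b‖ := by
  rcases eq_or_ne a 0 with rfl | ha
  · simp
  rcases eq_or_ne b 0 with rfl | hb
  · simp
  -- `absParts z` has the same norm as `z`, and its parts dominate those of `log (a * b)`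
  let absParts (z : ℂ) : ℂ := ⟨|z.re|, |z.im|⟩
  have norm_absParts (z : ℂ) : ‖absParts z‖ = ‖z‖ :=
    le_antisymm (norm_le_norm_of_abs_re_le_of_abs_im_le (by simp [absParts])
      (by simp [absParts])) (norm_le_norm_of_abs_re_le_of_abs_im_le (by simp [absParts])
      (by simp [absParts]))
  calc ‖log (a * b)‖ ≤ ‖absParts (log a) + absParts (log b)‖ := by
        apply norm_le_norm_of_abs_re_le_of_abs_im_le
        · simp only [log_re, norm_mul, Real.log_mul (norm_ne_zero_iff.mpr ha)
            (norm_ne_zero_iff.mpr hb), add_re, absParts]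
          exact (abs_add_le _ _).trans (le_abs_self _)
        · simp only [log_im, add_im, absParts]
          exact (abs_arg_mul_le ha hb).trans (le_abs_self _)
    _ ≤ ‖absParts (log a)‖ + ‖absParts (log b)‖ := norm_add_le _ _
    _ = ‖log a‖ + ‖log b‖ := by rw [norm_absParts, norm_absParts]

end Complex

noncomputable def hilbertDist {ι : Type*} (v w : ι → ℂ) : ℝ :=
  ⨆ p : ι × ι, ‖log ((w p.1 / w p.2) / (v p.1 / v p.2))‖

section HilbertDist

variable {ι : Type*}

theorem hilbertDist_comm (v w : ι → ℂ) : hilbertDist v w = hilbertDist w v := by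
  unfold hilbertDist
  congr 1 with p
  rw [← norm_log_inv, inv_div]

theorem hilbertDist_self (v : ι → ℂ) : hilbertDist v v = 0 := by
  have hterm (x : ℂ) : ‖log (x / x)‖ = 0 := by
    rcases eq_or_ne x 0 with rfl | hx
    · simp
    · simp [div_self hx]
  simp only [hilbertDist, hterm, Real.iSup_const_zero]

theorem hilbertDist_nonneg (v w : ι → ℂ) : 0 ≤ hilbertDist v w :=
  Real.iSup_nonneg fun _ => norm_nonneg _

variable [Finite ι]

theorem norm_log_le_hilbertDist (v w : ι → ℂ) (i j : ι) :
    ‖log ((w i / w j) / (v i / v j))‖ ≤ hilbertDist v w :=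
  le_ciSup (f := fun p : ι × ι => ‖log ((w p.1 / w p.2) / (v p.1 / v p.2))‖)
    (Finite.bddAbove_range _) (i, j)

theorem hilbertDist_triangle (u v w : ι → ℂ) (hv : ∀ i, v i ≠ 0) :
    hilbertDist u w ≤ hilbertDist u v + hilbertDist v w := by
  refine Real.iSup_le (fun ⟨i, j⟩ => ?_)
    (add_nonneg (hilbertDist_nonneg u v) (hilbertDist_nonneg v w))
  have hfactor : (w i / w j) / (u i / u j) =
      ((v i / v j) / (u i / u j)) * ((w i / w j) / (v i / v j)) := by
    rw [mul_comm, div_mul_div_cancel₀ (div_ne_zero (hv i) (hv j))]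
  calc ‖log ((w i / w j) / (u i / u j))‖
      ≤ ‖log ((v i / v j) / (u i / u j))‖ + ‖log ((w i / w j) / (v i / v j))‖ := by
        rw [hfactor]
        exact norm_log_mul_le _ _
    _ ≤ hilbertDist u v + hilbertDist v w :=
        add_le_add (norm_log_le_hilbertDist u v i j) (norm_log_le_hilbertDist v w i j)

theorem mul_eq_mul_of_hilbertDist_eq_zero {v w : ι → ℂ} (hv : ∀ i, v i ≠ 0)
    (hw : ∀ i, w i ≠ 0) (h : hilbertDist v w = 0) (i j : ι) : w i * v j = v i * w j := by
  have hlog : log ((w i / w j) / (v i / v j)) = 0 :=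
    norm_le_zero_iff.mp (h ▸ norm_log_le_hilbertDist v w i j)
  have hratio : (w i / w j) / (v i / v j) = 1 := by
    rw [← exp_log (div_ne_zero (div_ne_zero (hw i) (hw j)) (div_ne_zero (hv i) (hv j))), hlog,
      exp_zero]
  rwa [div_eq_one_iff_eq (div_ne_zero (hv i) (hv j)), div_eq_div_iff (hw j) (hv j)] at hratio

end HilbertDist

theorem eq_of_mul_eq_mul_of_sum_eq {ι K : Type*} [Fintype ι] [Field K] {v w : ι → K}
    (hvw : ∀ i j, w i * v j = v i * w j) (hsum : ∑ i, v i = ∑ i, w i) (hsum₀ : ∑ i, v i ≠ 0) :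
    v = w := by
  funext i
  have hscaled : v i * ∑ j, w j = w i * ∑ j, v j := by
    simp only [Finset.mul_sum, hvw i]
  rw [← hsum] at hscaled
  exact mul_right_cancel₀ hsum₀ hscaled

theorem stmt5_general (B : ℕ)
    (d : (Fin B → ℂ) → (Fin B → ℂ) → ℝ)
    (hd : ∀ v w, d v w =
      ⨆ p : Fin B × Fin B, ‖Complex.log ((w p.1 / w p.2) / (v p.1 / v p.2))‖)
    (S : Set (Fin B → ℂ))
    (hS : S = {w | (∑ i, w i) = 1 ∧ ∀ i, 0 < (w i).re}) :
    (∀ v ∈ S, ∀ w ∈ S, d v w = d w v) ∧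
    (∀ v ∈ S, ∀ w ∈ S, (d v w = 0 ↔ v = w)) ∧
    (∀ u ∈ S, ∀ v ∈ S, ∀ w ∈ S, d u w ≤ d u v + d v w) := by
  obtain rfl : d = hilbertDist := funext₂ hd
  subst hS
  have ne_zero {w : Fin B → ℂ} (hw : ∀ i, 0 < (w i).re) (i : Fin B) : w i ≠ 0 :=
    ne_zero_of_re_pos (hw i)
  refine ⟨fun v _ w _ => hilbertDist_comm v w, ?_,
    fun u _ v hv w _ => hilbertDist_triangle u v w (ne_zero hv.2)⟩
  rintro v ⟨hv₁, hv₂⟩ w ⟨hw₁, hw₂⟩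
  refine ⟨fun h => eq_of_mul_eq_mul_of_sum_eq
    (mul_eq_mul_of_hilbertDist_eq_zero (ne_zero hv₂) (ne_zero hw₂) h) (hv₁.trans hw₁.symm)
    (hv₁ ▸ one_ne_zero), ?_⟩
  rintro rfl
  exact hilbertDist_self v

theorem stmt5 (B : ℕ) (hB : 0 < B)
    (d : (Fin B → ℂ) → (Fin B → ℂ) → ℝ)
    (hd : ∀ v w, d v w =
      ⨆ p : Fin B × Fin B, ‖Complex.log ((w p.1 / w p.2) / (v p.1 / v p.2))‖)
    (S : Set (Fin B → ℂ))
    (hS : S = {w | (∑ i, w i) = 1 ∧ ∀ i, 0 < (w i).re}) :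
    (∀ v ∈ S, ∀ w ∈ S, d v w = d w v) ∧
    (∀ v ∈ S, ∀ w ∈ S, (d v w = 0 ↔ v = w)) ∧
    (∀ u ∈ S, ∀ v ∈ S, ∀ w ∈ S, d u w ≤ d u v + d v w) :=
  stmt5_general B d hd S hS
end

section
/- Let T = [[a, c], [b, d]] be a 2×2 matrix with strictly positive entries and ad - bc ≥ 0, and let f_T(z) = (a z + b)/(c z + d). Then f_T maps the open right half-plane H into itself, and for all z_1 ≠ z_2 in H, |Log(f_T(z_1)) - Log(f_T(z_2))| ≤ τ(T) |Log(z_1) - Log(z_2)|, where τ(T) = (1 - bc/(ad)) / (1 + bc/(ad)) < 1 and Log is the principal branch of the logarithm. -/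
/-!
In the coordinate `w = Log z` the right half-plane becomes the convex strip `|Im w| < π / 2`, and
`f_T` becomes `g(w) = Log f_T(e^w)` with `g'(w) = (ad - bc) z / ((az + b)(cz + d))`, `z = e^w`.
For `Re z ≥ 0` one has `|az + b|² ≥ a²|z|² + b²`, so by Cauchy–Schwarz
`|az + b| |cz + d| ≥ (ad + bc) |z|`, i.e. `|g'| ≤ (ad - bc) / (ad + bc) = τ(T)`. The mean value
theorem on the strip gives the contraction.
-/

open Complex

noncomputable def moebius (a b c d : ℝ) (z : ℂ) : ℂ := (a * z + b) / (c * z + d)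

lemma re_ofReal_mul_add_ofReal_pos {p q : ℝ} {z : ℂ} (hp : 0 ≤ p) (hq : 0 < q) (hz : 0 ≤ z.re) :
    0 < ((p : ℂ) * z + q).re := by
  simp only [add_re, re_ofReal_mul, ofReal_re]
  positivity

lemma ofReal_mul_add_ofReal_ne_zero {p q : ℝ} {z : ℂ} (hp : 0 ≤ p) (hq : 0 < q) (hz : 0 ≤ z.re) :
    (p : ℂ) * z + q ≠ 0 :=
  fun h ↦ (re_ofReal_mul_add_ofReal_pos hp hq hz).ne' (by rw [h, zero_re])

lemma sq_mul_sq_norm_add_sq_le_sq_norm {p q : ℝ} {z : ℂ} (hpq : 0 ≤ p * q) (hz : 0 ≤ z.re) :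
    p ^ 2 * ‖z‖ ^ 2 + q ^ 2 ≤ ‖(p : ℂ) * z + q‖ ^ 2 := by
  simp only [Complex.sq_norm, normSq_apply, add_re, add_im, re_ofReal_mul, im_ofReal_mul,
    ofReal_re, ofReal_im]
  nlinarith [mul_nonneg hpq hz]

lemma add_mul_mul_norm_le_norm_mul_norm {a b c d : ℝ} {z : ℂ} (ha : 0 ≤ a) (hb : 0 ≤ b)
    (hc : 0 ≤ c) (hd : 0 ≤ d) (hz : 0 ≤ z.re) :
    (a * d + b * c) * ‖z‖ ≤ ‖(a : ℂ) * z + b‖ * ‖(c : ℂ) * z + d‖ := by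
  have hab := sq_mul_sq_norm_add_sq_le_sq_norm (mul_nonneg ha hb) hz
  have hcd := sq_mul_sq_norm_add_sq_le_sq_norm (mul_nonneg hc hd) hz
  rw [← pow_le_pow_iff_left₀ (by positivity) (by positivity) two_ne_zero, mul_pow, mul_pow]
  calc (a * d + b * c) ^ 2 * ‖z‖ ^ 2
      ≤ (a ^ 2 * ‖z‖ ^ 2 + b ^ 2) * (c ^ 2 * ‖z‖ ^ 2 + d ^ 2) := by
        nlinarith [sq_nonneg (a * c * ‖z‖ ^ 2 - b * d)]
    _ ≤ _ := mul_le_mul hab hcd (by positivity) (by positivity)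

lemma moebius_re_pos {a b c d : ℝ} {z : ℂ} (ha : 0 ≤ a) (hb : 0 < b) (hc : 0 ≤ c) (hd : 0 < d)
    (hz : 0 ≤ z.re) : 0 < (moebius a b c d z).re := by
  have hden : 0 < normSq ((c : ℂ) * z + d) :=
    normSq_pos.2 (ofReal_mul_add_ofReal_ne_zero hc hd hz)
  rw [moebius, div_re, ← add_div]
  refine div_pos ?_ hden
  simp only [add_re, add_im, re_ofReal_mul, im_ofReal_mul, ofReal_re, ofReal_im]
  nlinarith [mul_pos (show 0 < a * z.re + b by positivity) (show 0 < c * z.re + d by positivity),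
    mul_nonneg (mul_nonneg ha hc) (sq_nonneg z.im)]

lemma hasDerivAt_log_moebius_exp {a b c d : ℝ} {w : ℂ} (ha : 0 ≤ a) (hb : 0 < b) (hc : 0 ≤ c)
    (hd : 0 < d) (hw : 0 ≤ (exp w).re) :
    HasDerivAt (fun w ↦ log (moebius a b c d (exp w)))
      ((a * d - b * c) * exp w / ((a * exp w + b) * (c * exp w + d))) w := by
  have hnum := ofReal_mul_add_ofReal_ne_zero ha hb hw
  have hden := ofReal_mul_add_ofReal_ne_zero hc hd hw
  have hexp := hasDerivAt_exp w
  have hquot := ((hexp.const_mul (a : ℂ)).add_const (b : ℂ)).div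
    ((hexp.const_mul (c : ℂ)).add_const (d : ℂ)) hden
  convert hquot.clog (Or.inl (moebius_re_pos ha hb hc hd hw)) using 1
  · rfl
  · simp only [Pi.div_apply]
    field_simp
    ring

lemma norm_det_mul_div_le {a b c d : ℝ} {z : ℂ} (ha : 0 < a) (hb : 0 < b) (hc : 0 < c)
    (hd : 0 < d) (hdet : b * c ≤ a * d) (hz : 0 ≤ z.re) :
    ‖(a * d - b * c) * z / ((a * z + b) * (c * z + d))‖ ≤ (a * d - b * c) / (a * d + b * c) := by
  have hnum := ofReal_mul_add_ofReal_ne_zero ha.le hb hz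
  have hden := ofReal_mul_add_ofReal_ne_zero hc.le hd hz
  have hdet' : ‖(a * d - b * c : ℂ)‖ = a * d - b * c := by
    rw [← ofReal_mul, ← ofReal_mul, ← ofReal_sub, norm_real,
      Real.norm_of_nonneg (sub_nonneg.2 hdet)]
  rw [norm_div, norm_mul, norm_mul, hdet', div_le_div_iff₀ (by positivity) (by positivity)]
  calc (a * d - b * c) * ‖z‖ * (a * d + b * c)
        = (a * d - b * c) * ((a * d + b * c) * ‖z‖) := by ring
    _ ≤ _ := mul_le_mul_of_nonneg_left
      (add_mul_mul_norm_le_norm_mul_norm ha.le hb.le hc.le hd.le hz) (sub_nonneg.2 hdet)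

lemma exp_re_pos_of_im_mem_Ioo {w : ℂ} (hw : w.im ∈ Set.Ioo (-(Real.pi / 2)) (Real.pi / 2)) :
    0 < (exp w).re := by
  rw [exp_re]
  exact mul_pos (Real.exp_pos _) (Real.cos_pos_of_mem_Ioo hw)

lemma log_im_mem_Ioo_of_re_pos {z : ℂ} (hz : 0 < z.re) :
    (log z).im ∈ Set.Ioo (-(Real.pi / 2)) (Real.pi / 2) := by
  rw [log_im, Set.mem_Ioo, ← abs_lt]
  exact abs_arg_lt_pi_div_two_iff.2 (Or.inl hz)

theorem norm_log_moebius_sub_le {a b c d : ℝ} {z₁ z₂ : ℂ} (ha : 0 < a) (hb : 0 < b) (hc : 0 < c)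
    (hd : 0 < d) (hdet : b * c ≤ a * d) (hz₁ : 0 < z₁.re) (hz₂ : 0 < z₂.re) :
    ‖log (moebius a b c d z₁) - log (moebius a b c d z₂)‖ ≤
      (a * d - b * c) / (a * d + b * c) * ‖log z₁ - log z₂‖ := by
  have hstrip : Convex ℝ (im ⁻¹' Set.Ioo (-(Real.pi / 2)) (Real.pi / 2)) :=
    (convex_Ioo _ _).linear_preimage imLm
  have hmvt := hstrip.norm_image_sub_le_of_norm_hasDerivWithin_le
    (f := fun w ↦ log (moebius a b c d (exp w)))
    (fun w hw ↦ (hasDerivAt_log_moebius_exp ha.le hb hc.le hd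
      (exp_re_pos_of_im_mem_Ioo hw).le).hasDerivWithinAt)
    (fun w hw ↦ norm_det_mul_div_le ha hb hc hd hdet (exp_re_pos_of_im_mem_Ioo hw).le)
    (log_im_mem_Ioo_of_re_pos hz₂) (log_im_mem_Ioo_of_re_pos hz₁)
  simpa only [exp_log (ne_zero_of_re_pos hz₁), exp_log (ne_zero_of_re_pos hz₂)] using hmvt

theorem stmt8 (a b c d : ℝ) (ha : 0 < a) (hb : 0 < b) (hc : 0 < c) (hd : 0 < d)
    (hdet : b * c ≤ a * d)
    (f : ℂ → ℂ) (hf : ∀ z, f z = ((a : ℂ) * z + b) / ((c : ℂ) * z + d))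
    (τ : ℝ) (hτ : τ = (1 - b * c / (a * d)) / (1 + b * c / (a * d))) :
    (∀ z : ℂ, 0 < z.re → 0 < (f z).re) ∧ τ < 1 ∧
    (∀ z₁ z₂ : ℂ, 0 < z₁.re → 0 < z₂.re → z₁ ≠ z₂ →
      ‖Complex.log (f z₁) - Complex.log (f z₂)‖ ≤
        τ * ‖Complex.log z₁ - Complex.log z₂‖) := by
  obtain rfl : f = moebius a b c d := funext hf
  have hratio : 0 < b * c / (a * d) := by positivity
  have hτ' : τ = (a * d - b * c) / (a * d + b * c) := by
    rw [hτ]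
    field_simp
  refine ⟨fun z hz ↦ moebius_re_pos ha.le hb hc.le hd hz.le, ?_, ?_⟩
  · rw [hτ, div_lt_one (by positivity)]
    linarith
  · intro z₁ z₂ hz₁ hz₂ _
    rw [hτ']
    exact norm_log_moebius_sub_le ha hb hc hd hdet hz₁ hz₂
end

section
/- Let a, b, c, d > 0 be reals with ad - bc ≥ 0 and f(z) = (az + b)/(cz + d). Then sup over z in the open right half-plane of |z f'(z) / f(z)| equals (1 - bc/(ad)) / (1 + bc/(ad)), the supremum being attained in the limit z → ± i √(bd/(ac)). -/
/-!
The logarithmic derivative of `f` is `(ad - bc) / (acz + (ad + bc) + bd/z)`. On the right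
half-plane `Re (acz + bd/z) ≥ 0`, so the denominator has modulus at least `ad + bc`. At the
boundary point `z = i √(bd/(ac))` the term `acz + bd/z` vanishes, so the bound
`(ad - bc) / (ad + bc)` is the value of the (continuous) modulus at a point of the closure of the
half-plane, hence it is the supremum.
-/

open Complex Set

-- Where `a * z + b = 0` both sides are `0`, by the convention `x / 0 = 0`.
theorem mul_deriv_div_moebius (a b c d : ℂ) {z : ℂ} (hz : z ≠ 0) (hcd : c * z + d ≠ 0) :
    z * deriv (fun w : ℂ => (a * w + b) / (c * w + d)) z / ((a * z + b) / (c * z + d)) =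
      (a * d - b * c) / (a * c * z + (a * d + b * c) + b * d / z) := by
  have hnum : HasDerivAt (fun w : ℂ => a * w + b) a z := by
    simpa using ((hasDerivAt_id z).const_mul a).add_const b
  have hden : HasDerivAt (fun w : ℂ => c * w + d) c z := by
    simpa using ((hasDerivAt_id z).const_mul c).add_const d
  have hfactor : a * c * z + (a * d + b * c) + b * d / z = (a * z + b) * (c * z + d) / z := by
    field_simp
    ring
  rw [(hnum.fun_div hden hcd).deriv, hfactor]
  field_simp
  ring

theorem re_mul_add_div_nonneg {p q : ℝ} (hp : 0 ≤ p) (hq : 0 ≤ q) {z : ℂ}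
    (hz : 0 ≤ z.re) :
    0 ≤ ((p : ℂ) * z + q / z).re := by
  rw [add_re, re_ofReal_mul, div_eq_mul_inv, re_ofReal_mul, inv_re]
  have := div_nonneg hz (normSq_nonneg z)
  positivity

theorem mul_mul_I_add_div_mul_I_eq_zero {p q y : ℝ} (hpq : p * y ^ 2 = q) :
    (p : ℂ) * (y * I) + q / (y * I) = 0 := by
  rw [← hpq]
  push_cast
  field_simp
  rw [I_sq]
  ring

theorem csSup_image_eq_of_mem_closure {α β : Type*} [TopologicalSpace α]
    [ConditionallyCompleteLinearOrder β] [TopologicalSpace β] [OrderTopology β]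
    {f : α → β} {s : Set α} {x : α} (hx : x ∈ closure s) (hf : ContinuousWithinAt f s x)
    (hle : ∀ y ∈ s, f y ≤ f x) : sSup (f '' s) = f x :=
  (isLUB_of_mem_closure (forall_mem_image.2 hle) (hf.mem_closure_image hx)).csSup_eq
    ((closure_nonempty_iff.1 ⟨x, hx⟩).image f)

section MoebiusDenom

variable {a b c d : ℝ}

noncomputable def moebiusDenom (a b c d : ℝ) (z : ℂ) : ℂ :=
  (a : ℂ) * c * z + (a * d + b * c) + b * d / z

theorem add_le_norm_moebiusDenom (hac : 0 ≤ a * c) (hbd : 0 ≤ b * d) {z : ℂ}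
    (hz : 0 ≤ z.re) : a * d + b * c ≤ ‖moebiusDenom a b c d z‖ := by
  have := re_mul_add_div_nonneg hac hbd hz
  refine le_trans ?_ (re_le_norm _)
  push_cast at this
  simp only [moebiusDenom, add_re, ofReal_re, ← ofReal_add, ← ofReal_mul] at this ⊢
  linarith

theorem moebiusDenom_sqrt_mul_I (hac : 0 < a * c) (hbd : 0 ≤ b * d) :
    moebiusDenom a b c d (Real.sqrt (b * d / (a * c)) * I) = a * d + b * c := by
  have := mul_mul_I_add_div_mul_I_eq_zero (p := a * c) (q := b * d)
    (y := Real.sqrt (b * d / (a * c)))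
    (by rw [Real.sq_sqrt (by positivity), mul_div_cancel₀ _ hac.ne'])
  push_cast at this
  unfold moebiusDenom
  linear_combination this

theorem continuousAt_moebiusDenom {z : ℂ} (hz : z ≠ 0) :
    ContinuousAt (moebiusDenom a b c d) z := by
  unfold moebiusDenom
  fun_prop (disch := exact hz)

theorem norm_mul_sub_mul_ofReal (hdet : b * c ≤ a * d) :
    ‖(a : ℂ) * d - b * c‖ = a * d - b * c := by
  norm_cast
  exact Real.norm_of_nonneg (by linarith)

theorem norm_div_moebiusDenom_le (ha : 0 < a) (hb : 0 < b) (hc : 0 < c) (hd : 0 < d)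
    (hdet : b * c ≤ a * d) {z : ℂ} (hz : 0 ≤ z.re) :
    ‖((a : ℂ) * d - b * c) / moebiusDenom a b c d z‖ ≤
      (a * d - b * c) / (a * d + b * c) := by
  rw [norm_div, norm_mul_sub_mul_ofReal hdet]
  exact div_le_div_of_nonneg_left (by linarith) (by positivity)
    (add_le_norm_moebiusDenom (by positivity) (by positivity) hz)

theorem norm_div_moebiusDenom_sqrt_mul_I (ha : 0 < a) (hb : 0 < b) (hc : 0 < c) (hd : 0 < d)
    (hdet : b * c ≤ a * d) :
    ‖((a : ℂ) * d - b * c) / moebiusDenom a b c d (Real.sqrt (b * d / (a * c)) * I)‖ =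
      (a * d - b * c) / (a * d + b * c) := by
  rw [moebiusDenom_sqrt_mul_I (by positivity) (by positivity), norm_div,
    norm_mul_sub_mul_ofReal hdet]
  norm_cast
  rw [Real.norm_of_nonneg (by positivity)]

end MoebiusDenom

theorem stmt9 (a b c d : ℝ) (ha : 0 < a) (hb : 0 < b) (hc : 0 < c) (hd : 0 < d)
    (hdet : b * c ≤ a * d) :
    sSup {r : ℝ | ∃ z : ℂ, 0 < z.re ∧
        r = ‖z * deriv (fun w : ℂ => ((a : ℂ) * w + b) / ((c : ℂ) * w + d)) z /
          (((a : ℂ) * z + b) / ((c : ℂ) * z + d))‖} =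
      (1 - b * c / (a * d)) / (1 + b * c / (a * d)) := by
  set F : ℂ → ℝ := fun z => ‖((a : ℂ) * d - b * c) / moebiusDenom a b c d z‖
  have hS : {r : ℝ | ∃ z : ℂ, 0 < z.re ∧
        r = ‖z * deriv (fun w : ℂ => ((a : ℂ) * w + b) / ((c : ℂ) * w + d)) z /
          (((a : ℂ) * z + b) / ((c : ℂ) * z + d))‖} = F '' {z | 0 < z.re} := by
    ext r
    refine exists_congr fun z => and_congr_right fun hz => ?_
    have hcd : (c : ℂ) * z + d ≠ 0 := ne_of_apply_ne re (by simp; positivity)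
    rw [mul_deriv_div_moebius _ _ _ _ (ne_of_apply_ne re hz.ne') hcd, eq_comm]
    rfl
  set x : ℂ := Real.sqrt (b * d / (a * c)) * I
  have hx : x ∈ closure {z : ℂ | 0 < z.re} := by simp [x]
  have hcont : ContinuousAt F x := by
    refine (continuousAt_const.div (continuousAt_moebiusDenom (by simp [x]; positivity)) ?_).norm
    rw [moebiusDenom_sqrt_mul_I (by positivity) (by positivity)]
    norm_cast
    positivity
  have hFx : F x = (a * d - b * c) / (a * d + b * c) :=
    norm_div_moebiusDenom_sqrt_mul_I ha hb hc hd hdet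
  have hle : ∀ z ∈ {z : ℂ | 0 < z.re}, F z ≤ F x := fun z hz =>
    hFx ▸ norm_div_moebiusDenom_le ha hb hc hd hdet hz.le
  rw [hS, csSup_image_eq_of_mem_closure hx hcont.continuousWithinAt hle, hFx]
  field_simp
end

section
/- On the open right half-plane H, for a Möbius transformation f_T(z) = (az + b)/(cz + d) induced by a strictly positive real 2×2 matrix T = [[a, c],[b, d]], the inequality |Re(z)/z| ≤ |Re(f_T(z))/f_T(z)| holds for all z ∈ H. -/
/-!
Write `f z = r * N` with `r = ‖c z + d‖⁻² > 0` and `N = (a z + b) * conj (c z + d)`. Then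
`Re N = a c ‖z‖² + (a d + b c) Re z + b d` and `Im N = (a d - b c) Im z`, and since
`|a d - b c| ≤ a d + b c` we get `|Im N| / Re N ≤ |Im z| / Re z`: the argument of `f z` is at most
that of `z` in absolute value, i.e. `Re w / ‖w‖ = cos (arg w)` can only grow.
-/

open ComplexConjugate

namespace Complex

lemma norm_ofReal_re_div_self (w : ℂ) : ‖(w.re : ℂ) / w‖ = |w.re| / ‖w‖ := by
  rw [norm_div, norm_real, Real.norm_eq_abs]

lemma norm_ofReal_re_div_self_ofReal_mul {r : ℝ} (hr : r ≠ 0) (w : ℂ) :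
    ‖((r * w).re : ℂ) / (r * w)‖ = ‖(w.re : ℂ) / w‖ := by
  rw [norm_ofReal_re_div_self, norm_ofReal_re_div_self, re_ofReal_mul, abs_mul, norm_mul,
    norm_real, Real.norm_eq_abs, mul_div_mul_left _ _ (abs_ne_zero.2 hr)]

lemma norm_ofReal_re_div_self_le_of_abs_mul_le {z w : ℂ} (hw : w ≠ 0)
    (h : |z.re| * |w.im| ≤ |w.re| * |z.im|) :
    ‖(z.re : ℂ) / z‖ ≤ ‖(w.re : ℂ) / w‖ := by
  rcases eq_or_ne z 0 with rfl | hz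
  · simp only [zero_re, ofReal_zero, zero_div, norm_zero]
    positivity
  rw [norm_ofReal_re_div_self, norm_ofReal_re_div_self,
    div_le_div_iff₀ (norm_pos_iff.2 hz) (norm_pos_iff.2 hw)]
  -- after squaring, the `re²·re²` terms cancel and only `h` squared remains
  have h_sq : (|z.re| * ‖w‖) ^ 2 ≤ (|w.re| * ‖z‖) ^ 2 := by
    simp only [mul_pow, sq_abs, Complex.sq_norm, normSq_apply]
    nlinarith [mul_self_le_mul_self (by positivity) h, sq_abs z.re, sq_abs z.im, sq_abs w.re,
      sq_abs w.im]
  exact pow_le_pow_iff_left₀ (by positivity) (by positivity) two_ne_zero |>.1 h_sq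

end Complex

open Complex

lemma re_mul_conj_linear (a b c d : ℝ) (z : ℂ) :
    ((a * z + b) * conj (c * z + d)).re = a * c * normSq z + (a * d + b * c) * z.re + b * d := by
  simp only [mul_re, mul_im, add_re, add_im, conj_re, conj_im, ofReal_re, ofReal_im, normSq_apply]
  ring

lemma im_mul_conj_linear (a b c d : ℝ) (z : ℂ) :
    ((a * z + b) * conj (c * z + d)).im = (a * d - b * c) * z.im := by
  simp only [mul_re, mul_im, add_re, add_im, conj_re, conj_im, ofReal_re, ofReal_im]
  ring

lemma re_mul_abs_im_mul_conj_linear_le {a b c d : ℝ} (ha : 0 ≤ a) (hb : 0 ≤ b) (hc : 0 ≤ c)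
    (hd : 0 ≤ d) {z : ℂ} (hz : 0 ≤ z.re) :
    z.re * |((a * z + b) * conj (c * z + d)).im| ≤
      ((a * z + b) * conj (c * z + d)).re * |z.im| := by
  rw [re_mul_conj_linear, im_mul_conj_linear, abs_mul]
  have had : 0 ≤ a * d := mul_nonneg ha hd
  have hbc : 0 ≤ b * c := mul_nonneg hb hc
  have hdet : |a * d - b * c| ≤ a * d + b * c := abs_sub_le_iff.2 ⟨by linarith, by linarith⟩
  have := normSq_nonneg z
  have : 0 ≤ (a * c * normSq z + b * d) * |z.im| := by positivity
  calc z.re * (|a * d - b * c| * |z.im|) ≤ z.re * ((a * d + b * c) * |z.im|) := by gcongr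
    _ ≤ _ := by linarith

theorem stmt13 (a b c d : ℝ) (ha : 0 < a) (hb : 0 < b) (hc : 0 < c) (hd : 0 < d)
    (f : ℂ → ℂ) (hf : ∀ z, f z = ((a : ℂ) * z + b) / ((c : ℂ) * z + d)) :
    ∀ z : ℂ, 0 < z.re →
      ‖((z.re : ℂ) / z)‖ ≤ ‖(((f z).re : ℂ) / f z)‖ := by
  intro z hz
  have hden : (c : ℂ) * z + d ≠ 0 :=
    ne_zero_of_re_pos (by rw [add_re, re_ofReal_mul, ofReal_re]; positivity)
  have hfz :
      f z = ((normSq ((c : ℂ) * z + d))⁻¹ : ℝ) * ((a * z + b) * conj (c * z + d)) := by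
    rw [hf, div_eq_mul_inv, inv_def]
    ring
  have hN_re : 0 < ((a * z + b) * conj (c * z + d)).re := by
    rw [re_mul_conj_linear]
    have := normSq_nonneg z
    positivity
  rw [hfz, norm_ofReal_re_div_self_ofReal_mul (inv_ne_zero (normSq_pos.2 hden).ne')]
  refine norm_ofReal_re_div_self_le_of_abs_mul_le (ne_zero_of_re_pos hN_re) ?_
  rw [abs_of_pos hz, abs_of_pos hN_re]
  exact re_mul_abs_im_mul_conj_linear_le ha.le hb.le hc.le hd.le hz.le
end

section
/- In the 2-dimensional case, the metric d_P(w, v) = log of the ratio of max over (i,j) to min over (i,j) of (|w̄_i v_j + w̄_j v_i| ± |w_i v_j - w_j v_i|)/(2 Re(w̄_i w_j)), when transformed via z_1 = w_2/w_1 and z_2 = v_2/v_1, reduces to the Poincaré metric on the right half-plane: d_P(z_1, z_2) = log((|z_1 + z̄_2| + |z_1 - z_2|)/(|z_1 + z̄_2| - |z_1 - z_2|)). -/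
/-!
Write `w = w₀ • (1, z₁)` and `v = v₀ • (1, z₂)`. Every ratio in the maximum and in the minimum is
multiplied by `‖v₀‖ / ‖w₀‖`, which cancels in the quotient. For the normalized vectors the
diagonal pairs give `1` and `‖z₂‖ / ‖z₁‖`, the off-diagonal pairs give
`(‖z₁ + z̄₂‖ ± ‖z₁ - z₂‖) / (2 Re z₁)`, and the off-diagonal values are the extreme ones. Besides
`‖z₁ + z̄₂‖² - ‖z₁ - z₂‖² = 4 Re z₁ Re z₂`, the estimate behind this is
`‖z₁‖ (‖z₁ + z̄₂‖ - ‖z₁ - z₂‖) ≤ 2 Re z₁ ‖z₂‖`, the triangle inequality applied to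
`‖z₁‖² (z₁ + z̄₂) = z₁² conj (z₁ - z₂) + 2 Re z₁ · z₁ z̄₂`.
-/

open ComplexConjugate

namespace Complex

theorem norm_add_conj_swap (a b : ℂ) : ‖b + conj a‖ = ‖a + conj b‖ := by
  rw [← norm_conj, map_add, conj_conj, add_comm]

theorem norm_add_conj_sq_sub_norm_sub_sq (a b : ℂ) :
    ‖a + conj b‖ ^ 2 - ‖a - b‖ ^ 2 = 4 * a.re * b.re := by
  simp only [Complex.sq_norm, normSq_apply, add_re, add_im, sub_re, sub_im, conj_re, conj_im]
  ring

theorem two_mul_re_le_norm_add_conj_add_norm_sub (a b : ℂ) :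
    2 * a.re ≤ ‖a + conj b‖ + ‖a - b‖ := by
  have hS := re_le_norm (a + conj b)
  have hD := re_le_norm (a - b)
  simp only [add_re, sub_re, conj_re] at hS hD
  linarith

theorem norm_add_conj_sub_norm_sub_le_two_mul_re {a b : ℂ} (ha : 0 ≤ a.re) (hb : 0 < b.re) :
    ‖a + conj b‖ - ‖a - b‖ ≤ 2 * a.re := by
  have hSD := norm_add_conj_sq_sub_norm_sub_sq a b
  have hb' := two_mul_re_le_norm_add_conj_add_norm_sub b a
  rw [norm_add_conj_swap, norm_sub_rev] at hb'
  nlinarith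

theorem norm_mul_norm_add_conj_sub_norm_sub_le {a : ℂ} (b : ℂ) (ha : 0 ≤ a.re) :
    ‖a‖ * (‖a + conj b‖ - ‖a - b‖) ≤ 2 * a.re * ‖b‖ := by
  have hid : a * conj a * (a + conj b) = a ^ 2 * conj (a - b) + (a + conj a) * (a * conj b) := by
    rw [map_sub]; ring
  have h := norm_add_le (a ^ 2 * conj (a - b)) ((a + conj a) * (a * conj b))
  rw [← hid, add_conj] at h
  simp only [norm_mul, norm_pow, norm_conj, norm_real, Real.norm_eq_abs, abs_two,
    abs_of_nonneg ha] at h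
  rcases (norm_nonneg a).eq_or_lt with h0 | h0
  · rw [← h0, zero_mul]; positivity
  · refine le_of_mul_le_mul_left ?_ h0
    linarith

theorem two_mul_re_mul_norm_le {a b : ℂ} (hb : 0 < b.re) :
    2 * a.re * ‖b‖ ≤ ‖a‖ * (‖a + conj b‖ + ‖a - b‖) := by
  have hSD := norm_add_conj_sq_sub_norm_sub_sq a b
  have h := norm_mul_norm_add_conj_sub_norm_sub_le a hb.le
  rw [norm_add_conj_swap, norm_sub_rev] at h
  have h' := mul_le_mul_of_nonneg_right h (by positivity : 0 ≤ ‖a + conj b‖ + ‖a - b‖)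
  have hprod : ‖b‖ * (‖a + conj b‖ - ‖a - b‖) * (‖a + conj b‖ + ‖a - b‖)
      = 2 * b.re * (2 * a.re * ‖b‖) := by
    linear_combination ‖b‖ * hSD
  refine le_of_mul_le_mul_left ?_ (by positivity : 0 < 2 * b.re)
  linarith

theorem norm_conj_mul_add_conj_mul_div (z u : ℂ) :
    ‖conj z * u + conj z * u‖ / (2 * (conj z * z).re) = ‖u‖ / ‖z‖ := by
  rw [← two_mul, norm_mul, norm_mul, norm_conj, Complex.norm_two, conj_mul',
    ← ofReal_pow, ofReal_re]
  rcases eq_or_ne ‖z‖ 0 with h | h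
  · simp [h]
  · field_simp

end Complex

open Complex

section PairRatios

variable {ι : Type*} (w v : ι → ℂ)

/-- The ratios whose maximum (`upperRatio`) and minimum (`lowerRatio`) over all pairs `(i, j)`
enter the paper's `d_P(w, v)`. -/
noncomputable def upperRatio (p : ι × ι) : ℝ :=
  (‖conj (w p.1) * v p.2 + conj (w p.2) * v p.1‖ + ‖w p.1 * v p.2 - w p.2 * v p.1‖) /
    (2 * (conj (w p.1) * w p.2).re)

noncomputable def lowerRatio (p : ι × ι) : ℝ :=
  (‖conj (w p.1) * v p.2 + conj (w p.2) * v p.1‖ - ‖w p.1 * v p.2 - w p.2 * v p.1‖) /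
    (2 * (conj (w p.1) * w p.2).re)

theorem upperRatio_swap (i j : ι) : upperRatio w v (j, i) = upperRatio w v (i, j) := by
  simp only [upperRatio]
  rw [add_comm (conj (w j) * v i), norm_sub_rev (w j * v i), ← conj_re (conj (w j) * w i),
    map_mul, conj_conj, mul_comm (w j) (conj (w i))]

theorem lowerRatio_swap (i j : ι) : lowerRatio w v (j, i) = lowerRatio w v (i, j) := by
  simp only [lowerRatio]
  rw [add_comm (conj (w j) * v i), norm_sub_rev (w j * v i), ← conj_re (conj (w j) * w i),
    map_mul, conj_conj, mul_comm (w j) (conj (w i))]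

theorem upperRatio_diag (i : ι) : upperRatio w v (i, i) = ‖v i‖ / ‖w i‖ := by
  simp only [upperRatio, sub_self, norm_zero, add_zero, norm_conj_mul_add_conj_mul_div]

theorem lowerRatio_diag (i : ι) : lowerRatio w v (i, i) = ‖v i‖ / ‖w i‖ := by
  simp only [lowerRatio, sub_self, norm_zero, sub_zero, norm_conj_mul_add_conj_mul_div]

variable {w v} {c d : ℂ}

theorem norm_conj_smul_mul_add (c d : ℂ) (i j : ι) :
    ‖conj ((c • w) i) * (d • v) j + conj ((c • w) j) * (d • v) i‖ =
      ‖c‖ * ‖d‖ * ‖conj (w i) * v j + conj (w j) * v i‖ := by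
  simp only [Pi.smul_apply, smul_eq_mul, map_mul]
  rw [show conj c * conj (w i) * (d * v j) + conj c * conj (w j) * (d * v i)
      = conj c * d * (conj (w i) * v j + conj (w j) * v i) by ring, norm_mul, norm_mul,
    norm_conj]

theorem norm_smul_mul_sub (c d : ℂ) (i j : ι) :
    ‖(c • w) i * (d • v) j - (c • w) j * (d • v) i‖ = ‖c‖ * ‖d‖ * ‖w i * v j - w j * v i‖ := by
  simp only [Pi.smul_apply, smul_eq_mul]
  rw [show c * w i * (d * v j) - c * w j * (d * v i) = c * d * (w i * v j - w j * v i) by ring,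
    norm_mul, norm_mul]

theorem re_conj_smul_mul_smul (c : ℂ) (i j : ι) :
    (conj ((c • w) i) * (c • w) j).re = ‖c‖ ^ 2 * (conj (w i) * w j).re := by
  simp only [Pi.smul_apply, smul_eq_mul, map_mul]
  rw [show conj c * conj (w i) * (c * w j) = conj c * c * (conj (w i) * w j) by ring,
    conj_mul', ← ofReal_pow, re_ofReal_mul]

theorem upperRatio_smul (hc : c ≠ 0) (p : ι × ι) :
    upperRatio (c • w) (d • v) p = ‖d‖ / ‖c‖ * upperRatio w v p := by
  have : ‖c‖ ≠ 0 := norm_ne_zero_iff.2 hc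
  simp only [upperRatio, norm_conj_smul_mul_add, norm_smul_mul_sub, re_conj_smul_mul_smul]
  field_simp

theorem lowerRatio_smul (hc : c ≠ 0) (p : ι × ι) :
    lowerRatio (c • w) (d • v) p = ‖d‖ / ‖c‖ * lowerRatio w v p := by
  have : ‖c‖ ≠ 0 := norm_ne_zero_iff.2 hc
  simp only [lowerRatio, norm_conj_smul_mul_add, norm_smul_mul_sub, re_conj_smul_mul_smul]
  field_simp

theorem iSup_upperRatio_smul (hc : c ≠ 0) :
    ⨆ p, upperRatio (c • w) (d • v) p = ‖d‖ / ‖c‖ * ⨆ p, upperRatio w v p := by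
  simp only [upperRatio_smul hc, Real.mul_iSup_of_nonneg (by positivity : 0 ≤ ‖d‖ / ‖c‖)]

theorem iInf_lowerRatio_smul (hc : c ≠ 0) :
    ⨅ p, lowerRatio (c • w) (d • v) p = ‖d‖ / ‖c‖ * ⨅ p, lowerRatio w v p := by
  simp only [lowerRatio_smul hc, Real.mul_iInf_of_nonneg (by positivity : 0 ≤ ‖d‖ / ‖c‖)]

end PairRatios

theorem eq_smul_vecCons_div {w : Fin 2 → ℂ} (h : w 0 ≠ 0) : w = w 0 • ![1, w 1 / w 0] := by
  ext i
  fin_cases i <;> simp [mul_div_cancel₀ _ h]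

theorem iSup_upperRatio_vecCons_one {a b : ℂ} (ha : 0 < a.re) (hb : 0 < b.re) :
    ⨆ p, upperRatio ![1, a] ![1, b] p = (‖a + conj b‖ + ‖a - b‖) / (2 * a.re) := by
  have h01 : upperRatio ![1, a] ![1, b] (0, 1) = (‖a + conj b‖ + ‖a - b‖) / (2 * a.re) := by
    simp [upperRatio, norm_add_conj_swap a b, norm_sub_rev b a]
  refine (IsGreatest.isLUB ⟨Set.mem_range.2 ⟨(0, 1), h01⟩, Set.forall_mem_range.2 ?_⟩).ciSup_eq
  simp only [Prod.forall, Fin.forall_fin_two, upperRatio_diag, upperRatio_swap ![1, a] ![1, b] 0 1,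
    h01, Matrix.cons_val_zero, Matrix.cons_val_one, norm_one, div_one]
  have ha' : 0 < 2 * a.re := by positivity
  refine ⟨⟨?_, le_rfl⟩, le_rfl, ?_⟩
  · rw [one_le_div₀ ha']
    exact two_mul_re_le_norm_add_conj_add_norm_sub a b
  · rw [div_le_div_iff₀ (ha.trans_le (re_le_norm a)) ha']
    linarith [two_mul_re_mul_norm_le (a := a) hb]

theorem iInf_lowerRatio_vecCons_one {a b : ℂ} (ha : 0 < a.re) (hb : 0 < b.re) :
    ⨅ p, lowerRatio ![1, a] ![1, b] p = (‖a + conj b‖ - ‖a - b‖) / (2 * a.re) := by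
  have h01 : lowerRatio ![1, a] ![1, b] (0, 1) = (‖a + conj b‖ - ‖a - b‖) / (2 * a.re) := by
    simp [lowerRatio, norm_add_conj_swap a b, norm_sub_rev b a]
  refine (IsLeast.isGLB ⟨Set.mem_range.2 ⟨(0, 1), h01⟩, Set.forall_mem_range.2 ?_⟩).ciInf_eq
  simp only [Prod.forall, Fin.forall_fin_two, lowerRatio_diag, lowerRatio_swap ![1, a] ![1, b] 0 1,
    h01, Matrix.cons_val_zero, Matrix.cons_val_one, norm_one, div_one]
  have ha' : 0 < 2 * a.re := by positivity
  refine ⟨⟨?_, le_rfl⟩, le_rfl, ?_⟩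
  · rw [div_le_one₀ ha']
    exact norm_add_conj_sub_norm_sub_le_two_mul_re ha.le hb
  · rw [div_le_div_iff₀ ha' (ha.trans_le (re_le_norm a))]
    linarith [norm_mul_norm_add_conj_sub_norm_sub_le b ha.le]

theorem stmt16_general (w v : Fin 2 → ℂ)
    (z₁ z₂ : ℂ) (hz1 : z₁ = w 1 / w 0) (hz2 : z₂ = v 1 / v 0)
    (h1 : 0 < z₁.re) (h2 : 0 < z₂.re) :
    Real.log
        ((⨆ p : Fin 2 × Fin 2,
            (‖conj (w p.1) * v p.2 + conj (w p.2) * v p.1‖ +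
              ‖w p.1 * v p.2 - w p.2 * v p.1‖) /
              (2 * (conj (w p.1) * w p.2).re)) /
          (⨅ p : Fin 2 × Fin 2,
            (‖conj (w p.1) * v p.2 + conj (w p.2) * v p.1‖ -
              ‖w p.1 * v p.2 - w p.2 * v p.1‖) /
              (2 * (conj (w p.1) * w p.2).re))) =
      Real.log ((‖z₁ + conj z₂‖ + ‖z₁ - z₂‖) /
        (‖z₁ + conj z₂‖ - ‖z₁ - z₂‖)) := by
  have hw0 : w 0 ≠ 0 := fun h => by simp [hz1, h] at h1
  have hv0 : v 0 ≠ 0 := fun h => by simp [hz2, h] at h2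
  change Real.log ((⨆ p, upperRatio w v p) / ⨅ p, lowerRatio w v p) = _
  rw [eq_smul_vecCons_div hw0, eq_smul_vecCons_div hv0, ← hz1, ← hz2, iSup_upperRatio_smul hw0,
    iInf_lowerRatio_smul hw0, mul_div_mul_left _ _ (by positivity),
    iSup_upperRatio_vecCons_one h1 h2, iInf_lowerRatio_vecCons_one h1 h2,
    div_div_div_cancel_right₀ (by positivity)]

theorem stmt16 (w v : Fin 2 → ℂ) (hw : w 0 + w 1 = 1) (hv : v 0 + v 1 = 1)
    (z₁ z₂ : ℂ) (hz1 : z₁ = w 1 / w 0) (hz2 : z₂ = v 1 / v 0)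
    (h1 : 0 < z₁.re) (h2 : 0 < z₂.re) :
    Real.log
        ((⨆ p : Fin 2 × Fin 2,
            (‖conj (w p.1) * v p.2 + conj (w p.2) * v p.1‖ +
              ‖w p.1 * v p.2 - w p.2 * v p.1‖) /
              (2 * (conj (w p.1) * w p.2).re)) /
          (⨅ p : Fin 2 × Fin 2,
            (‖conj (w p.1) * v p.2 + conj (w p.2) * v p.1‖ -
              ‖w p.1 * v p.2 - w p.2 * v p.1‖) /
              (2 * (conj (w p.1) * w p.2).re))) =
      Real.log ((‖z₁ + conj z₂‖ + ‖z₁ - z₂‖) /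
        (‖z₁ + conj z₂‖ - ‖z₁ - z₂‖)) :=
  stmt16_general w v z₁ z₂ hz1 hz2 h1 h2
end

section
/- Let Π be a 2×2 positive stochastic matrix with det Π > 0 and 0 < ε_0 < 1/2, and let S = [S_1, S_2] = [ε_0 π_10 / ((1−ε_0) π_11), (1−ε_0) π_00 / (ε_0 π_01)]. Then S_1 ≤ S_2, and both maps f^{ε_0}_0 and f^{ε_0}_1 (with f^ε_z(x) = (p_E(z)/p_E(z̄))(π_00 x + π_10)/(π_01 x + π_11), p_E(0)=ε, p_E(1)=1−ε) map [0, ∞] into S; i.e., S contains the union f^{ε_0}_0([0,∞]) ∪ f^{ε_0}_1([0,∞]). -/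
/-! Since det Π > 0, the Möbius map x ↦ (π00 x + π10)/(π01 x + π11) sends [0, ∞] into
[π10/π11, π00/π01]. The prefactor p_E(z)/p_E(z̄) is r = ε0/(1-ε0) or 1/r, and r ≤ 1/r, so
multiplying the two intervals gives S = [r π10/π11, π00/(r π01)]. -/

open Set

lemma mobius_mem_Icc {a b c d x : ℝ} (hc : 0 < c) (hd : 0 < d) (hdet : c * b ≤ a * d)
    (hx : 0 ≤ x) : (a * x + b) / (c * x + d) ∈ Icc (b / d) (a / c) := by
  have hden : 0 < c * x + d := by positivity
  have hgap : 0 ≤ x * (a * d - c * b) := mul_nonneg hx (sub_nonneg.2 hdet)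
  constructor
  · rw [div_le_div_iff₀ hd hden]; nlinarith
  · rw [div_le_div_iff₀ hden hc]; nlinarith

lemma mul_mem_Icc_mul_Icc {r s t lo hi f : ℝ} (hr : 0 ≤ r) (hlo : 0 ≤ lo)
    (ht : t ∈ Icc r s) (hf : f ∈ Icc lo hi) : t * f ∈ Icc (r * lo) (s * hi) :=
  ⟨mul_le_mul ht.1 hf.1 hlo (hr.trans ht.1),
    mul_le_mul ht.2 hf.2 (hlo.trans hf.1) (hr.trans (ht.1.trans ht.2))⟩

lemma div_one_sub_le_one_sub_div {ε : ℝ} (hε0 : 0 < ε) (hε1 : ε < 1 / 2) :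
    ε / (1 - ε) ≤ (1 - ε) / ε := by
  rw [div_le_div_iff₀ (by linarith) hε0]; nlinarith

theorem stmt19_general (π00 π01 π10 π11 : ℝ)
    (h01 : 0 < π01) (h10 : 0 < π10) (h11 : 0 < π11)
    (hdet : π01 * π10 < π00 * π11)
    (ε0 : ℝ) (hε0 : 0 < ε0) (hε1 : ε0 < 1 / 2)
    (S1 S2 : ℝ) (hS1 : S1 = ε0 * π10 / ((1 - ε0) * π11))
    (hS2 : S2 = (1 - ε0) * π00 / (ε0 * π01))
    (pE : Fin 2 → ℝ) (hpE0 : pE 0 = ε0) (hpE1 : pE 1 = 1 - ε0) :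
    S1 ≤ S2 ∧
    (∀ zz : Fin 2, ∀ x : ℝ, 0 ≤ x →
      pE zz / pE (1 - zz) * ((π00 * x + π10) / (π01 * x + π11)) ∈ Set.Icc S1 S2) ∧
    (∀ zz : Fin 2, pE zz / pE (1 - zz) * (π00 / π01) ∈ Set.Icc S1 S2) := by
  have hodds : ∀ zz : Fin 2, pE zz / pE (1 - zz) ∈ Icc (ε0 / (1 - ε0)) ((1 - ε0) / ε0) := by
    have hle := div_one_sub_le_one_sub_div hε0 hε1
    intro zz
    fin_cases zz
    · simpa [hpE0, hpE1] using hle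
    · simpa [hpE0, hpE1] using hle
  have hS : Icc S1 S2 = Icc (ε0 / (1 - ε0) * (π10 / π11)) ((1 - ε0) / ε0 * (π00 / π01)) := by
    rw [hS1, hS2, mul_div_mul_comm, mul_div_mul_comm]
  have hmem : ∀ zz f, f ∈ Icc (π10 / π11) (π00 / π01) → pE zz / pE (1 - zz) * f ∈ Icc S1 S2 :=
    fun zz _ hf => hS ▸
      mul_mem_Icc_mul_Icc (div_nonneg hε0.le (by linarith)) (by positivity) (hodds zz) hf
  have hlim : π00 / π01 ∈ Icc (π10 / π11) (π00 / π01) :=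
    right_mem_Icc.2 ((div_le_div_iff₀ h11 h01).2 (by linarith))
  exact ⟨nonempty_Icc.1 ⟨_, hmem 0 _ hlim⟩,
    fun zz _ hx => hmem zz _ (mobius_mem_Icc h01 h11 hdet.le hx), fun zz => hmem zz _ hlim⟩

theorem stmt19 (π00 π01 π10 π11 : ℝ)
    (h00 : 0 < π00) (h01 : 0 < π01) (h10 : 0 < π10) (h11 : 0 < π11)
    (hrow0 : π00 + π01 = 1) (hrow1 : π10 + π11 = 1)
    (hdet : π01 * π10 < π00 * π11)
    (ε0 : ℝ) (hε0 : 0 < ε0) (hε1 : ε0 < 1 / 2)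
    (S1 S2 : ℝ) (hS1 : S1 = ε0 * π10 / ((1 - ε0) * π11))
    (hS2 : S2 = (1 - ε0) * π00 / (ε0 * π01))
    (pE : Fin 2 → ℝ) (hpE0 : pE 0 = ε0) (hpE1 : pE 1 = 1 - ε0) :
    S1 ≤ S2 ∧
    (∀ zz : Fin 2, ∀ x : ℝ, 0 ≤ x →
      pE zz / pE (1 - zz) * ((π00 * x + π10) / (π01 * x + π11)) ∈ Set.Icc S1 S2) ∧
    (∀ zz : Fin 2, pE zz / pE (1 - zz) * (π00 / π01) ∈ Set.Icc S1 S2) :=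
  stmt19_general π00 π01 π10 π11 h01 h10 h11 hdet ε0 hε0 hε1 S1 S2 hS1 hS2 pE hpE0 hpE1
end
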